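/- arXiv:2309.13784 — 2 statements merged into one kernel-verified Lean document; each statement's English description precedes it below -/
import Mathlib

section
/- Let $s > 3/2$ and $T > 0$. There exists a constant $C = C_s > 0$ such that for all $\alpha \in (1, 2)$ and all $t \in [0, T]$, $\left(\int_{\mathbb{R}^3} |e^{-t|\xi|^\alpha} - e^{-t|\xi|^2}|^2 (1+|\xi|^2)^{-s}\, d\xi\right)^{1/2} \le C\, T\, (2 - \alpha)$. -/
open MeasureTheory Real

lemma exp_diff_le_aux {t a b : ℝ} :
    Real.exp (-t * a) - Real.exp (-t * b) ≤ t * (b - a) * Real.exp (-t * a) := by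
  have h1 : Real.exp (-t * b) = Real.exp (-t * a) * Real.exp (-(t * (b - a))) := by
    rw [← Real.exp_add]; ring_nf
  rw [h1]
  have h2 : 1 - t * (b - a) ≤ Real.exp (-(t * (b - a))) := by
    nlinarith [Real.add_one_le_exp (-(t * (b - a)))]
  nlinarith [Real.exp_pos (-t * a)]

lemma self_mul_exp_neg_le_one {x : ℝ} (hx : 0 ≤ x) : x * Real.exp (-x) ≤ 1 := by
  have h1 : Real.exp (-x) * Real.exp x = 1 := by rw [← Real.exp_add]; simp
  nlinarith [Real.add_one_le_exp x, Real.exp_pos (-x)]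

set_option maxHeartbeats 1000000 in
/-- Pointwise estimate. -/
lemma ptwise {T ε α t r : ℝ} (hT : 0 < T) (hε : 0 < ε)
    (hα1 : 1 < α) (hα2 : α < 2) (ht0 : 0 ≤ t) (htT : t ≤ T) (hr : 0 ≤ r) :
    |Real.exp (-t * r ^ α) - Real.exp (-t * r ^ (2 : ℝ))|
      ≤ (2 - α) * (T + 3 / ε) * (1 + r ^ 2) ^ ε := by
  have hA : 0 < T + 3 / ε := by positivity
  have h2α : 0 < 2 - α := by linarith
  have h3ε : (0:ℝ) < 3 / ε := by positivity
  have hw0 : (0:ℝ) ≤ (1 + r ^ 2) ^ ε := Real.rpow_nonneg (by positivity) ε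
  have hw1 : (1 : ℝ) ≤ (1 + r ^ 2) ^ ε :=
    Real.one_le_rpow (by nlinarith) hε.le
  have key : |Real.exp (-t * r ^ α) - Real.exp (-t * r ^ (2 : ℝ))|
      ≤ (2 - α) * (T + 3 / ε) * 1 ∨
      |Real.exp (-t * r ^ α) - Real.exp (-t * r ^ (2 : ℝ))|
      ≤ (2 - α) * (T + 3 / ε) * (1 + r ^ 2) ^ ε := by
    by_cases hcase : ε < 2 - α
    · -- easy case: trivial bound by 2
      left
      have h1 : Real.exp (-t * r ^ α) ≤ 1 := by
        apply Real.exp_le_one_iff.2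
        nlinarith [mul_nonneg ht0 (Real.rpow_nonneg hr α)]
      have h2 : Real.exp (-t * r ^ (2:ℝ)) ≤ 1 := by
        apply Real.exp_le_one_iff.2
        nlinarith [mul_nonneg ht0 (Real.rpow_nonneg hr (2:ℝ))]
      have h3 : |Real.exp (-t * r ^ α) - Real.exp (-t * r ^ (2 : ℝ))| ≤ 2 := by
        have := Real.exp_pos (-t * r ^ α)
        have := Real.exp_pos (-t * r ^ (2:ℝ))
        rw [abs_le]; constructor <;> nlinarith
      have h4 : (2:ℝ) ≤ (2 - α) * (3 / ε) := by
        rw [mul_div_assoc', le_div_iff₀ hε]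
        nlinarith
      calc |Real.exp (-t * r ^ α) - Real.exp (-t * r ^ (2 : ℝ))| ≤ 2 := h3
        _ ≤ (2 - α) * (3 / ε) := h4
        _ ≤ (2 - α) * (T + 3 / ε) * 1 := by nlinarith
    · push_neg at hcase
      rcases eq_or_lt_of_le hr with hr0 | hr0
      · left
        rw [← hr0, Real.zero_rpow (by linarith), Real.zero_rpow (by norm_num)]
        simp
        positivity
      rcases le_or_gt r 1 with hr1 | hr1
      · -- 0 < r ≤ 1
        left
        have hmono : r ^ (2:ℝ) ≤ r ^ α :=
          Real.rpow_le_rpow_of_exponent_ge hr0 hr1 (by linarith)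
        have habs : |Real.exp (-t * r ^ α) - Real.exp (-t * r ^ (2 : ℝ))|
            = Real.exp (-t * r ^ (2:ℝ)) - Real.exp (-t * r ^ α) := by
          rw [abs_sub_comm, abs_of_nonneg]
          have h5 : -t * r ^ α ≤ -t * r ^ (2:ℝ) := by
            nlinarith [mul_nonneg ht0 (sub_nonneg.2 hmono)]
          have := Real.exp_le_exp.2 h5
          linarith
        rw [habs]
        have step1 : Real.exp (-t * r ^ (2:ℝ)) - Real.exp (-t * r ^ α)
            ≤ t * (r ^ α - r ^ (2:ℝ)) * Real.exp (-t * r ^ (2:ℝ)) := exp_diff_le_aux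
        have hexp1 : Real.exp (-t * r ^ (2:ℝ)) ≤ 1 := by
          apply Real.exp_le_one_iff.2
          nlinarith [mul_nonneg ht0 (Real.rpow_nonneg hr (2:ℝ))]
        have hlog : Real.log r ≤ 0 := Real.log_nonpos hr hr1
        have e2 : r ^ (2:ℝ) = Real.exp (Real.log r * 2) := Real.rpow_def_of_pos hr0 2
        have ea : r ^ α = Real.exp (Real.log r * α) := Real.rpow_def_of_pos hr0 α
        have hd : r ^ α - r ^ (2:ℝ) ≤ 2 - α := by
          have h1 : Real.exp (Real.log r * 2)
              = Real.exp (Real.log r * α) * Real.exp (Real.log r * (2 - α)) := by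
            rw [← Real.exp_add]; ring_nf
          have h2 : 1 - Real.exp (Real.log r * (2 - α)) ≤ -(Real.log r) * (2 - α) := by
            nlinarith [Real.add_one_le_exp (Real.log r * (2 - α))]
          have h3 : Real.exp (Real.log r * α) ≤ r := by
            nth_rewrite 2 [← Real.exp_log hr0]
            apply Real.exp_le_exp.2
            nlinarith
          have h4 : r * (-Real.log r) ≤ 1 := by
            have h5 := Real.log_le_sub_one_of_pos (show (0:ℝ) < r⁻¹ by positivity)
            rw [Real.log_inv] at h5
            have h6 : r * (-Real.log r) ≤ r * (r⁻¹ - 1) := by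
              apply mul_le_mul_of_nonneg_left _ hr
              linarith
            have h7 : r * r⁻¹ = 1 := mul_inv_cancel₀ (ne_of_gt hr0)
            nlinarith [h6, h7]
          rw [e2, ea, h1]
          -- exp(lrα)(1 - exp(lr(2-α))) ≤ exp(lrα)(-lr)(2-α) ≤ r(-lr)(2-α) ≤ (2-α)
          have h7 : Real.exp (Real.log r * α) * (1 - Real.exp (Real.log r * (2 - α)))
              ≤ Real.exp (Real.log r * α) * (-(Real.log r) * (2 - α)) :=
            mul_le_mul_of_nonneg_left h2 (Real.exp_pos _).le
          have h8 : Real.exp (Real.log r * α) * (-(Real.log r) * (2 - α))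
              ≤ r * (-(Real.log r)) * (2 - α) := by
            have h9 : Real.exp (Real.log r * α) * (-(Real.log r))
                ≤ r * (-(Real.log r)) :=
              mul_le_mul_of_nonneg_right h3 (by linarith)
            nlinarith [h9]
          linarith [h7, h8, mul_le_mul_of_nonneg_right h4 h2α.le]
        have hdpos : 0 ≤ r ^ α - r ^ (2:ℝ) := sub_nonneg.2 hmono
        have h10 : t * (r ^ α - r ^ (2:ℝ)) ≤ T * (2 - α) :=
          mul_le_mul htT hd hdpos hT.le
        nlinarith [mul_nonneg ht0 hdpos]
      · -- r > 1, 2 - α ≤ ε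
        right
        have hmono : r ^ α ≤ r ^ (2:ℝ) :=
          Real.rpow_le_rpow_of_exponent_le hr1.le (by linarith)
        set L := Real.log r with hL
        have hLpos : 0 < L := Real.log_pos hr1
        have habs : |Real.exp (-t * r ^ α) - Real.exp (-t * r ^ (2 : ℝ))|
            = Real.exp (-t * r ^ α) - Real.exp (-t * r ^ (2:ℝ)) := by
          rw [abs_of_nonneg]
          have h5 : -t * r ^ (2:ℝ) ≤ -t * r ^ α := by
            nlinarith [mul_nonneg ht0 (sub_nonneg.2 hmono)]
          have := Real.exp_le_exp.2 h5
          linarith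
        rw [habs]
        have step1 : Real.exp (-t * r ^ α) - Real.exp (-t * r ^ (2:ℝ))
            ≤ t * (r ^ (2:ℝ) - r ^ α) * Real.exp (-t * r ^ α) := exp_diff_le_aux
        have e2 : r ^ (2:ℝ) = Real.exp (L * 2) := Real.rpow_def_of_pos hr0 2
        have ea : r ^ α = Real.exp (L * α) := Real.rpow_def_of_pos hr0 α
        -- r^2 - r^α ≤ (2-α) * L * r^2
        have hd : r ^ (2:ℝ) - r ^ α ≤ (2 - α) * L * r ^ (2:ℝ) := by
          have := exp_diff_le_aux (t := 1) (a := -(L * 2)) (b := -(L * α))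
          simp only [neg_neg, one_mul, neg_mul] at this
          rw [e2, ea]
          linarith [this]
        -- t * r^2 * exp(-t r^α) ≤ r^(2-α)
        have hsplit : r ^ (2:ℝ) = r ^ α * r ^ (2 - α) := by
          rw [← Real.rpow_add hr0]; ring_nf
        have hxe : t * r ^ α * Real.exp (-(t * r ^ α)) ≤ 1 :=
          self_mul_exp_neg_le_one (mul_nonneg ht0 (Real.rpow_nonneg hr α))
        have h11 : t * r ^ (2:ℝ) * Real.exp (-t * r ^ α) ≤ r ^ (2 - α) := by
          rw [hsplit, neg_mul]
          have h12 : 0 ≤ r ^ (2 - α) := Real.rpow_nonneg hr _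
          calc t * (r ^ α * r ^ (2 - α)) * Real.exp (-(t * r ^ α))
              = r ^ (2 - α) * (t * r ^ α * Real.exp (-(t * r ^ α))) := by ring
            _ ≤ r ^ (2 - α) * 1 := mul_le_mul_of_nonneg_left hxe h12
            _ = r ^ (2 - α) := mul_one _
        -- L ≤ r^ε / ε
        have hlogle : L ≤ r ^ ε / ε := by
          have h13 : Real.log (r ^ ε) ≤ r ^ ε - 1 :=
            Real.log_le_sub_one_of_pos (Real.rpow_pos_of_pos hr0 ε)
          rw [Real.log_rpow hr0] at h13
          rw [le_div_iff₀ hε]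
          nlinarith
        have h14 : r ^ (2 - α) * r ^ ε ≤ (1 + r ^ 2) ^ ε := by
          rw [← Real.rpow_add hr0]
          have h15 : r ^ (2 - α + ε) ≤ r ^ (2 * ε) :=
            Real.rpow_le_rpow_of_exponent_le hr1.le (by linarith)
          have h16 : r ^ (2 * ε) = (r ^ 2) ^ ε := by
            rw [← Real.rpow_natCast r 2, ← Real.rpow_mul hr]
            norm_num
          have h17 : (r ^ 2 : ℝ) ^ ε ≤ (1 + r ^ 2) ^ ε :=
            Real.rpow_le_rpow (by positivity) (by linarith) hε.le
          rw [h16] at h15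
          linarith
        -- assemble
        have hrε : 0 ≤ r ^ ε := Real.rpow_nonneg hr ε
        have hr2α : 0 ≤ r ^ (2 - α) := Real.rpow_nonneg hr _
        have step2 : t * (r ^ (2:ℝ) - r ^ α) * Real.exp (-t * r ^ α)
            ≤ (2 - α) * L * (t * r ^ (2:ℝ) * Real.exp (-t * r ^ α)) := by
          have hep := (Real.exp_pos (-t * r ^ α)).le
          have := mul_le_mul_of_nonneg_right hd (mul_nonneg ht0 hep)
          linarith [this]
        have step3 : (2 - α) * L * (t * r ^ (2:ℝ) * Real.exp (-t * r ^ α))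
            ≤ (2 - α) * L * r ^ (2 - α) :=
          mul_le_mul_of_nonneg_left h11 (by positivity)
        have step4 : (2 - α) * L * r ^ (2 - α) ≤ (2 - α) * (r ^ ε / ε) * r ^ (2 - α) := by
          apply mul_le_mul_of_nonneg_right _ hr2α
          exact mul_le_mul_of_nonneg_left hlogle h2α.le
        have step5 : (2 - α) * (r ^ ε / ε) * r ^ (2 - α)
            ≤ (2 - α) * (1 / ε) * (1 + r ^ 2) ^ ε := by
          have : (2 - α) * (r ^ ε / ε) * r ^ (2 - α)
              = (2 - α) * (1 / ε) * (r ^ (2 - α) * r ^ ε) := by ring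
          rw [this]
          exact mul_le_mul_of_nonneg_left h14 (by positivity)
        have step6 : (2 - α) * (1 / ε) * (1 + r ^ 2) ^ ε
            ≤ (2 - α) * (T + 3 / ε) * (1 + r ^ 2) ^ ε := by
          apply mul_le_mul_of_nonneg_right _ hw0
          apply mul_le_mul_of_nonneg_left _ h2α.le
          rw [one_div]
          have : ε⁻¹ ≤ 3 / ε := by rw [div_eq_mul_inv]; nlinarith [inv_pos.2 hε]
          linarith
        linarith
  rcases key with h | h
  · calc |Real.exp (-t * r ^ α) - Real.exp (-t * r ^ (2 : ℝ))|
        ≤ (2 - α) * (T + 3 / ε) * 1 := h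
      _ ≤ (2 - α) * (T + 3 / ε) * (1 + r ^ 2) ^ ε :=
        mul_le_mul_of_nonneg_left hw1 (by positivity)
  · exact h

/-- Key upper estimate: for `s > 3/2` and `T > 0` there is `C = C_s` such that
for all `α ∈ (1, 2)` and `t ∈ [0, T]`, the `H^{-s}` norm (via Plancherel) of
`h_α(t,·) - h(t,·)` is at most `C * T * (2 - α)`. -/
theorem stmt_5 (s T : ℝ) (hs : 3 / 2 < s) (hT : 0 < T) :
    ∃ C > (0 : ℝ), ∀ α : ℝ, 1 < α → α < 2 → ∀ t : ℝ, t ∈ Set.Icc 0 T →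
      Real.sqrt (∫ ξ : EuclideanSpace ℝ (Fin 3),
          |Real.exp (-t * ‖ξ‖ ^ α) - Real.exp (-t * ‖ξ‖ ^ (2 : ℝ))| ^ 2
            * (1 + ‖ξ‖ ^ 2) ^ (-s))
        ≤ C * T * (2 - α) := by
  set ε : ℝ := min ((2 * s - 3) / 8) (1 / 4) with hεdef
  have hε : 0 < ε := lt_min (by linarith) (by norm_num)
  have hεle : ε ≤ (2 * s - 3) / 8 := min_le_left _ _
  have hse : (3 : ℝ) < 2 * (s - 2 * ε) := by linarith
  set A : ℝ := T + 3 / ε with hAdef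
  have hA : 0 < A := by positivity
  -- integrability of the dominating weight
  have hint : Integrable (fun ξ : EuclideanSpace ℝ (Fin 3) =>
      ((1 : ℝ) + ‖ξ‖ ^ 2) ^ (2 * ε - s)) := by
    have h := integrable_rpow_neg_one_add_norm_sq
      (E := EuclideanSpace ℝ (Fin 3)) (μ := volume) (r := 2 * (s - 2 * ε)) ?_
    · convert h using 2 with ξ
      ring_nf
    · rw [finrank_euclideanSpace_fin]
      exact_mod_cast hse
  set I : ℝ := ∫ ξ : EuclideanSpace ℝ (Fin 3), ((1 : ℝ) + ‖ξ‖ ^ 2) ^ (2 * ε - s) with hIdef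
  have hI0 : 0 ≤ I := integral_nonneg fun ξ => Real.rpow_nonneg (by positivity) _
  refine ⟨(A * Real.sqrt I + 1) / T, by positivity, ?_⟩
  intro α hα1 hα2 t ht
  obtain ⟨ht0, htT⟩ := ht
  have h2α : (0:ℝ) ≤ 2 - α := by linarith
  -- pointwise bound on the integrand
  have hbound : ∀ ξ : EuclideanSpace ℝ (Fin 3),
      |Real.exp (-t * ‖ξ‖ ^ α) - Real.exp (-t * ‖ξ‖ ^ (2 : ℝ))| ^ 2
          * (1 + ‖ξ‖ ^ 2) ^ (-s)
        ≤ ((2 - α) * A) ^ 2 * ((1 : ℝ) + ‖ξ‖ ^ 2) ^ (2 * ε - s) := by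
    intro ξ
    set r := ‖ξ‖ with hrdef
    have hr : 0 ≤ r := norm_nonneg _
    have hpos : (0:ℝ) < 1 + r ^ 2 := by positivity
    have hpt := ptwise hT hε hα1 hα2 ht0 htT hr
    have hsq : |Real.exp (-t * r ^ α) - Real.exp (-t * r ^ (2 : ℝ))| ^ 2
        ≤ ((2 - α) * A * (1 + r ^ 2) ^ ε) ^ 2 :=
      pow_le_pow_left₀ (abs_nonneg _) hpt 2
    have hws : (0:ℝ) ≤ (1 + r ^ 2) ^ (-s) := Real.rpow_nonneg hpos.le _
    have hmul := mul_le_mul_of_nonneg_right hsq hws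
    refine hmul.trans (le_of_eq ?_)
    have he : ((1 + r ^ 2) ^ ε) ^ 2 * (1 + r ^ 2) ^ (-s)
        = ((1:ℝ) + r ^ 2) ^ (2 * ε - s) := by
      rw [← Real.rpow_natCast ((1 + r ^ 2) ^ ε) 2, ← Real.rpow_mul hpos.le,
        ← Real.rpow_add hpos]
      norm_num
      ring_nf
    calc ((2 - α) * A * (1 + r ^ 2) ^ ε) ^ 2 * (1 + r ^ 2) ^ (-s)
        = ((2 - α) * A) ^ 2 * (((1 + r ^ 2) ^ ε) ^ 2 * (1 + r ^ 2) ^ (-s)) := by ring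
      _ = ((2 - α) * A) ^ 2 * ((1:ℝ) + r ^ 2) ^ (2 * ε - s) := by rw [he]
  have hg_int : Integrable (fun ξ : EuclideanSpace ℝ (Fin 3) =>
      ((2 - α) * A) ^ 2 * ((1 : ℝ) + ‖ξ‖ ^ 2) ^ (2 * ε - s)) := hint.const_mul _
  have hf_nonneg : ∀ ξ : EuclideanSpace ℝ (Fin 3),
      0 ≤ |Real.exp (-t * ‖ξ‖ ^ α) - Real.exp (-t * ‖ξ‖ ^ (2 : ℝ))| ^ 2
          * (1 + ‖ξ‖ ^ 2) ^ (-s) := fun ξ => by positivity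
  have hmono := integral_mono_of_nonneg (Filter.Eventually.of_forall hf_nonneg)
    hg_int (Filter.Eventually.of_forall hbound)
  have hgI : (∫ ξ : EuclideanSpace ℝ (Fin 3),
      ((2 - α) * A) ^ 2 * ((1 : ℝ) + ‖ξ‖ ^ 2) ^ (2 * ε - s)) = ((2 - α) * A) ^ 2 * I := by
    rw [MeasureTheory.integral_const_mul]
  rw [hgI] at hmono
  have hsqrt : Real.sqrt (∫ ξ : EuclideanSpace ℝ (Fin 3),
        |Real.exp (-t * ‖ξ‖ ^ α) - Real.exp (-t * ‖ξ‖ ^ (2 : ℝ))| ^ 2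
          * (1 + ‖ξ‖ ^ 2) ^ (-s))
      ≤ (2 - α) * A * Real.sqrt I := by
    have h1 := Real.sqrt_le_sqrt hmono
    rwa [Real.sqrt_mul (sq_nonneg _), Real.sqrt_sq (by positivity)] at h1
  refine hsqrt.trans ?_
  have hCT : (A * Real.sqrt I + 1) / T * T = A * Real.sqrt I + 1 := by
    field_simp
  rw [hCT]
  nlinarith [Real.sqrt_nonneg I]
end

section
/- Let $s > 3/2$ and $T > 0$. There exist a constant $c > 0$ and $\varepsilon_1 \in (0, 1)$ such that for all $\alpha \in (1 + \varepsilon_1, 2)$, $\sup_{0 \le t \le T} \left(\int_{\mathbb{R}^3} |e^{-t|\xi|^\alpha} - e^{-t|\xi|^2}|^2 (1+|\xi|^2)^{-s}\, d\xi\right)^{1/2} \ge c\, \frac{T}{2}\, (2-\alpha)$. -/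
open MeasureTheory Real

set_option maxHeartbeats 1000000

/-- Lower estimate: for `s > 3/2` and `T > 0` there are `c > 0` and `ε₁ ∈ (0, 1)`
such that for all `α ∈ (1 + ε₁, 2)`,
`sup_{0 ≤ t ≤ T} ‖h_α(t,·) - h(t,·)‖_{H^{-s}} ≥ c * (T/2) * (2 - α)`. -/
theorem stmt_7 (s T : ℝ) (hs : 3 / 2 < s) (hT : 0 < T) :
    ∃ c > (0 : ℝ), ∃ ε₁ ∈ Set.Ioo (0 : ℝ) 1, ∀ α : ℝ, 1 + ε₁ < α → α < 2 →
      c * (T / 2) * (2 - α) ≤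
        ⨆ t ∈ Set.Icc (0 : ℝ) T,
          Real.sqrt (∫ ξ : EuclideanSpace ℝ (Fin 3),
            |Real.exp (-t * ‖ξ‖ ^ α) - Real.exp (-t * ‖ξ‖ ^ (2 : ℝ))| ^ 2
              * (1 + ‖ξ‖ ^ 2) ^ (-s)) := by
  set E := EuclideanSpace ℝ (Fin 3)
  -- the bound function
  set b : E → ℝ := fun ξ => (1 + ‖ξ‖ ^ 2) ^ (-s) with hb_def
  have hb_cont : Continuous b := by
    apply (continuous_const.add (continuous_norm.pow 2)).rpow_const
    intro x; left; exact ne_of_gt (by positivity : (0:ℝ) < 1 + ‖x‖ ^ 2)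
  have hb_nonneg : ∀ ξ : E, 0 ≤ b ξ := fun ξ => by positivity
  have hb_int : Integrable b := by
    have h3 : (Module.finrank ℝ E : ℝ) < 2 * s := by
      rw [finrank_euclideanSpace_fin]; push_cast; linarith
    have := integrable_rpow_neg_one_add_norm_sq (E := E) (μ := volume) h3
    simpa [show -(2 * s) / 2 = -s by ring] using this
  -- the annulus
  set A : Set E := Metric.ball (0 : E) 4 \ Metric.closedBall (0 : E) 2 with hA_def
  have hA_open : IsOpen A := Metric.isOpen_ball.sdiff Metric.isClosed_closedBall
  have hA_meas : MeasurableSet A := hA_open.measurableSet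
  have hA_ne : A.Nonempty := by
    refine ⟨EuclideanSpace.single (0 : Fin 3) (3 : ℝ), ?_, ?_⟩
    · rw [Metric.mem_ball, dist_zero_right, EuclideanSpace.norm_single]
      norm_num
    · rw [Metric.mem_closedBall, dist_zero_right, EuclideanSpace.norm_single]
      norm_num
  have hA_vol_lt : volume A < ⊤ :=
    lt_of_le_of_lt (measure_mono Set.diff_subset) measure_ball_lt_top
  have hA_pos : 0 < volume A := hA_open.measure_pos volume hA_ne
  set v : ℝ := (volume A).toReal with hv_def
  have hv_pos : 0 < v := ENNReal.toReal_pos hA_pos.ne' hA_vol_lt.ne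
  -- norms on the annulus
  have hA_norm : ∀ ξ ∈ A, 2 < ‖ξ‖ ∧ ‖ξ‖ < 4 := by
    intro ξ hξ
    obtain ⟨h1, h2⟩ := hξ
    rw [Metric.mem_ball, dist_zero_right] at h1
    rw [Metric.mem_closedBall, dist_zero_right] at h2
    exact ⟨lt_of_not_ge h2, h1⟩
  -- the constant
  set K : ℝ := Real.exp (-(8 * T)) * Real.log 2 with hK_def
  have hK_pos : 0 < K := mul_pos (Real.exp_pos _) (Real.log_pos one_lt_two)
  set c : ℝ := K * Real.sqrt ((17 : ℝ) ^ (-s) * v) with hc_def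
  have h17 : (0 : ℝ) < (17 : ℝ) ^ (-s) := Real.rpow_pos_of_pos (by norm_num) _
  have hc_pos : 0 < c := mul_pos hK_pos (Real.sqrt_pos.mpr (mul_pos h17 hv_pos))
  refine ⟨c, hc_pos, 1 / 2, ⟨by norm_num, by norm_num⟩, ?_⟩
  intro α hα1 hα2
  have hα0 : (0 : ℝ) < α := by linarith
  -- the integrand for given t
  set f : ℝ → E → ℝ := fun t ξ =>
    |Real.exp (-t * ‖ξ‖ ^ α) - Real.exp (-t * ‖ξ‖ ^ (2 : ℝ))| ^ 2
      * (1 + ‖ξ‖ ^ 2) ^ (-s) with hf_def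
  have hf_nonneg : ∀ t (ξ : E), 0 ≤ f t ξ := fun t ξ => by positivity
  have hf_cont : ∀ t : ℝ, Continuous (f t) := by
    intro t
    have h1 : Continuous fun ξ : E => Real.exp (-t * ‖ξ‖ ^ α) :=
      Real.continuous_exp.comp (continuous_const.mul
        (continuous_norm.rpow_const fun x => Or.inr hα0.le))
    have h2 : Continuous fun ξ : E => Real.exp (-t * ‖ξ‖ ^ (2 : ℝ)) :=
      Real.continuous_exp.comp (continuous_const.mul
        (continuous_norm.rpow_const fun x => Or.inr (by norm_num)))
    exact (((h1.sub h2).abs.pow 2)).mul hb_cont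
  -- for 0 ≤ t, f t ≤ b pointwise
  have hf_le_b : ∀ t : ℝ, 0 ≤ t → ∀ ξ : E, f t ξ ≤ b ξ := by
    intro t ht ξ
    have e1 : Real.exp (-t * ‖ξ‖ ^ α) ≤ 1 := by
      rw [Real.exp_le_one_iff, neg_mul]
      exact neg_nonpos.mpr (mul_nonneg ht (Real.rpow_nonneg (norm_nonneg _) _))
    have e2 : Real.exp (-t * ‖ξ‖ ^ (2:ℝ)) ≤ 1 := by
      rw [Real.exp_le_one_iff, neg_mul]
      exact neg_nonpos.mpr (mul_nonneg ht (Real.rpow_nonneg (norm_nonneg _) _))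
    have p1 := Real.exp_pos (-t * ‖ξ‖ ^ α)
    have p2 := Real.exp_pos (-t * ‖ξ‖ ^ (2:ℝ))
    have habs : |Real.exp (-t * ‖ξ‖ ^ α) - Real.exp (-t * ‖ξ‖ ^ (2 : ℝ))| ≤ 1 := by
      rw [abs_sub_le_iff]; constructor <;> linarith
    calc f t ξ ≤ 1 * b ξ := by
          apply mul_le_mul_of_nonneg_right _ (hb_nonneg ξ)
          exact pow_le_one₀ (abs_nonneg _) habs
      _ = b ξ := one_mul _
  have hf_int : ∀ t : ℝ, 0 ≤ t → Integrable (f t) := by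
    intro t ht
    refine hb_int.mono' (hf_cont t).aestronglyMeasurable ?_
    filter_upwards with ξ
    rw [Real.norm_eq_abs, abs_of_nonneg (hf_nonneg t ξ)]
    exact hf_le_b t ht ξ
  -- key pointwise lower bound at t = T/2 on the annulus
  set t₀ : ℝ := T / 2 with ht₀_def
  have ht₀_pos : 0 < t₀ := by positivity
  set D : ℝ := Real.exp (-(8 * T)) * (t₀ * ((2 - α) * Real.log 2)) with hD_def
  have hD_nonneg : 0 ≤ D := by
    have hl := (Real.log_pos (show (1:ℝ) < 2 by norm_num)).le
    exact mul_nonneg (Real.exp_pos _).le (mul_nonneg ht₀_pos.le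
      (mul_nonneg (by linarith) hl))
  have hkey : ∀ ξ ∈ A, D ^ 2 * (17 : ℝ) ^ (-s) ≤ f t₀ ξ := by
    intro ξ hξ
    obtain ⟨hr2, hr4⟩ := hA_norm ξ hξ
    set r : ℝ := ‖ξ‖ with hr_def
    have hr_pos : (0 : ℝ) < r := by linarith
    -- r^2 - r^α ≥ (2-α) log 2
    have h_rpow_split : r ^ (2 : ℝ) = r ^ α * r ^ (2 - α) := by
      rw [← Real.rpow_add hr_pos]; ring_nf
    have h_ra_ge1 : (1 : ℝ) ≤ r ^ α := Real.one_le_rpow (by linarith) hα0.le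
    have h_exp_lb : (2 - α) * Real.log r + 1 ≤ r ^ (2 - α) := by
      rw [Real.rpow_def_of_pos hr_pos, mul_comm (Real.log r)]
      exact Real.add_one_le_exp _
    have h_logr : Real.log 2 ≤ Real.log r :=
      Real.log_le_log (by norm_num) (by linarith)
    have h_gap : (2 - α) * Real.log 2 ≤ r ^ (2 : ℝ) - r ^ α := by
      have h1 : (2 - α) * Real.log 2 ≤ (2 - α) * Real.log r :=
        mul_le_mul_of_nonneg_left h_logr (by linarith)
      have h2 : r ^ (2 - α) - 1 ≤ r ^ α * (r ^ (2 - α) - 1) :=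
        le_mul_of_one_le_left
          (sub_nonneg.mpr (Real.one_le_rpow (by linarith) (by linarith))) h_ra_ge1
      calc (2 - α) * Real.log 2 ≤ (2 - α) * Real.log r := h1
        _ ≤ r ^ (2 - α) - 1 := by linarith
        _ ≤ r ^ α * (r ^ (2 - α) - 1) := h2
        _ = r ^ (2 : ℝ) - r ^ α := by rw [h_rpow_split]; ring
    -- e^{-t₀ r^α} - e^{-t₀ r^2} ≥ D
    have h_tr2 : t₀ * r ^ (2 : ℝ) ≤ 8 * T := by
      rw [Real.rpow_two, ht₀_def]
      nlinarith [mul_pos hT (mul_pos (show (0:ℝ) < 4 - r by linarith)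
        (show (0:ℝ) < 4 + r by linarith))]
    have h_exp_le : Real.exp (-t₀ * r ^ (2:ℝ)) ≤ Real.exp (-t₀ * r ^ α) := by
      apply Real.exp_le_exp.mpr
      have : r ^ α ≤ r ^ (2:ℝ) :=
        Real.rpow_le_rpow_of_exponent_le (by linarith) (by linarith)
      nlinarith [ht₀_pos]
    have h_diff_lb : D ≤ Real.exp (-t₀ * r ^ α) - Real.exp (-t₀ * r ^ (2 : ℝ)) := by
      have hfact : Real.exp (-t₀ * r ^ α) - Real.exp (-t₀ * r ^ (2 : ℝ))
          = Real.exp (-t₀ * r ^ (2 : ℝ)) * (Real.exp (t₀ * (r ^ (2:ℝ) - r ^ α)) - 1) := by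
        rw [mul_sub, ← Real.exp_add, mul_one]; ring_nf
      rw [hfact]
      have h_e1 : t₀ * (r ^ (2:ℝ) - r ^ α) ≤ Real.exp (t₀ * (r ^ (2:ℝ) - r ^ α)) - 1 := by
        linarith [Real.add_one_le_exp (t₀ * (r ^ (2:ℝ) - r ^ α))]
      have h_e2 : Real.exp (-(8 * T)) ≤ Real.exp (-t₀ * r ^ (2 : ℝ)) := by
        apply Real.exp_le_exp.mpr; linarith
      have h_t_gap : t₀ * ((2 - α) * Real.log 2) ≤ t₀ * (r ^ (2:ℝ) - r ^ α) :=
        mul_le_mul_of_nonneg_left h_gap ht₀_pos.le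
      have hgap_nn : 0 ≤ t₀ * ((2 - α) * Real.log 2) :=
        mul_nonneg ht₀_pos.le (mul_nonneg (by linarith)
          (Real.log_pos (show (1:ℝ) < 2 by norm_num)).le)
      calc D ≤ Real.exp (-(8*T)) * (t₀ * (r ^ (2:ℝ) - r ^ α)) := by
            rw [hD_def]
            exact mul_le_mul_of_nonneg_left h_t_gap (Real.exp_pos _).le
        _ ≤ Real.exp (-t₀ * r ^ (2:ℝ)) * (Real.exp (t₀ * (r ^ (2:ℝ) - r ^ α)) - 1) := by
            apply mul_le_mul h_e2 h_e1 (by linarith) (Real.exp_pos _).le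
    -- b lower bound
    have h_b_lb : (17 : ℝ) ^ (-s) ≤ (1 + r ^ 2) ^ (-s) := by
      have h17' : 1 + r ^ 2 ≤ 17 := by
        nlinarith [mul_pos (show (0:ℝ) < 4 - r by linarith) (show (0:ℝ) < 4 + r by linarith)]
      exact Real.rpow_le_rpow_of_nonpos (by nlinarith [sq_nonneg r]) h17' (by linarith)
    -- combine
    have h_abs : D ≤ |Real.exp (-t₀ * r ^ α) - Real.exp (-t₀ * r ^ (2 : ℝ))| := by
      rw [abs_of_nonneg (by linarith)]; exact h_diff_lb
    calc D ^ 2 * (17 : ℝ) ^ (-s)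
        ≤ |Real.exp (-t₀ * r ^ α) - Real.exp (-t₀ * r ^ (2 : ℝ))| ^ 2 * (1 + r ^ 2) ^ (-s) := by
          apply mul_le_mul (pow_le_pow_left₀ hD_nonneg h_abs 2) h_b_lb h17.le (by positivity)
      _ = f t₀ ξ := rfl
  -- integral lower bound
  have h_int_lb : D ^ 2 * ((17 : ℝ) ^ (-s) * v) ≤ ∫ ξ, f t₀ ξ := by
    have h1 : (D ^ 2 * (17 : ℝ) ^ (-s)) * v ≤ ∫ ξ in A, f t₀ ξ := by
      have h := setIntegral_ge_of_const_le_real hA_meas hA_vol_lt.ne hkey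
        ((hf_int t₀ ht₀_pos.le).integrableOn)
      exact h
    have h2 : ∫ ξ in A, f t₀ ξ ≤ ∫ ξ, f t₀ ξ :=
      setIntegral_le_integral (hf_int t₀ ht₀_pos.le)
        (Filter.Eventually.of_forall (hf_nonneg t₀))
    calc D ^ 2 * ((17 : ℝ) ^ (-s) * v) = (D ^ 2 * (17 : ℝ) ^ (-s)) * v := by ring
      _ ≤ ∫ ξ in A, f t₀ ξ := h1
      _ ≤ ∫ ξ, f t₀ ξ := h2
  -- sqrt lower bound
  have h_sqrt_lb : c * (T / 2) * (2 - α) ≤ Real.sqrt (∫ ξ, f t₀ ξ) := by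
    have h1 : Real.sqrt (D ^ 2 * ((17 : ℝ) ^ (-s) * v)) ≤ Real.sqrt (∫ ξ, f t₀ ξ) :=
      Real.sqrt_le_sqrt h_int_lb
    have h2 : Real.sqrt (D ^ 2 * ((17 : ℝ) ^ (-s) * v))
        = D * Real.sqrt ((17 : ℝ) ^ (-s) * v) := by
      rw [Real.sqrt_mul (sq_nonneg D), Real.sqrt_sq hD_nonneg]
    have h3 : c * (T / 2) * (2 - α) = D * Real.sqrt ((17 : ℝ) ^ (-s) * v) := by
      rw [hc_def, hD_def, hK_def, ht₀_def]; ring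
    rw [h3, ← h2]; exact h1
  -- pass to the supremum
  set g : ℝ → ℝ := fun t => Real.sqrt (∫ ξ, f t ξ) with hg_def
  have h_g_bdd : ∀ t ∈ Set.Icc (0 : ℝ) T, g t ≤ Real.sqrt (∫ ξ, b ξ) := by
    intro t ht
    apply Real.sqrt_le_sqrt
    exact integral_mono (hf_int t ht.1) hb_int (hf_le_b t ht.1)
  have h_bdd : BddAbove (Set.range fun t => ⨆ _ : t ∈ Set.Icc (0 : ℝ) T, g t) := by
    refine ⟨max (Real.sqrt (∫ ξ, b ξ)) 0, ?_⟩
    rintro y ⟨t, rfl⟩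
    show (⨆ _ : t ∈ Set.Icc (0 : ℝ) T, g t) ≤ _
    by_cases ht : t ∈ Set.Icc (0 : ℝ) T
    · rw [ciSup_pos ht]
      exact le_max_of_le_left (h_g_bdd t ht)
    · haveI : IsEmpty (t ∈ Set.Icc (0 : ℝ) T) := ⟨fun h => ht h⟩
      rw [Real.iSup_of_isEmpty]
      exact le_max_right _ _
  have ht₀_mem : t₀ ∈ Set.Icc (0 : ℝ) T := ⟨ht₀_pos.le, by linarith⟩
  calc c * (T / 2) * (2 - α) ≤ g t₀ := h_sqrt_lb
    _ = ⨆ _ : t₀ ∈ Set.Icc (0 : ℝ) T, g t₀ := (ciSup_pos (f := fun _ : t₀ ∈ Set.Icc (0:ℝ) T => g t₀) ht₀_mem).symm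
    _ ≤ ⨆ t, ⨆ _ : t ∈ Set.Icc (0 : ℝ) T, g t := le_ciSup h_bdd t₀
end
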